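/- Let H_0 = (S,T;F_0) be a simple bigraph with bipartite complement G_0, r_S the rank function of a matroid on S, p_T a positively intersecting supermodular set-function on T, and m_V = (m_S, m_T) a degree-specification with m̃_S(S) = m̃_T(T) = γ satisfying Condition (★). Then the set-function p_1 is positively ST-crossing supermodular. -/

import Mathlib

open Finset

variable {α : Type*} [DecidableEq α]

/-- The number of edges of the bigraph with edge set `E` connecting `X ⊆ S` and `Y ⊆ T`. -/
def edgesBetween (E : Finset (α × α)) (X Y : Finset α) : ℕ :=
  (E.filter (fun e => e.1 ∈ X ∧ e.2 ∈ Y)).card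

/-- The set of neighbours (in `S`) of a subset `Z ⊆ T` in the bigraph with edge set `E`. -/
def nbrs (E : Finset (α × α)) (Z : Finset α) : Finset α :=
  (E.filter (fun e => e.2 ∈ Z)).image Prod.fst

/-- The degree of a node `v ∈ S` in the bigraph with edge set `E`. -/
def degS (E : Finset (α × α)) (v : α) : ℕ := (E.filter (fun e => e.1 = v)).card

/-- The degree of a node `v ∈ T` in the bigraph with edge set `E`. -/
def degT (E : Finset (α × α)) (v : α) : ℕ := (E.filter (fun e => e.2 = v)).card

/-- `r` is the rank function of a matroid on the ground set `S`. -/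
def IsRankFn (S : Finset α) (r : Finset α → ℕ) : Prop :=
  (∀ X, X ⊆ S → r X ≤ X.card) ∧
  (∀ X Y, X ⊆ Y → Y ⊆ S → r X ≤ r Y) ∧
  (∀ X Y, X ⊆ S → Y ⊆ S → r (X ∪ Y) + r (X ∩ Y) ≤ r X + r Y)

/-- `V' ∈ ℋ₀`: no arc of the orientation of `H₀` (from `S` to `T`) enters `V'`. -/
def memH₀ (F₀ : Finset (α × α)) (V' : Finset α) : Prop :=
  ∀ e ∈ F₀, e.2 ∈ V' → e.1 ∈ V'

instance (F₀ : Finset (α × α)) (V' : Finset α) : Decidable (memH₀ F₀ V') := by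
  unfold memH₀; infer_instance

/-- The set-function `p₀` of the paper:
`p₀(V') = max{p_T({y}) − r_S(X), m_T(y) − |X| + d_{H₀}(y)}` if `V' = X ∪ {y} ∈ ℋ₀`
with `X ⊆ S`, `y ∈ T`; `p₀(V') = p_T(Y) − r_S(X)` if `V' = X ∪ Y ∈ ℋ₀` with `X ⊆ S`,
`Y ⊆ T`, `|Y| ≥ 2`; and `p₀(V') = 0` otherwise. -/
def p₀ (S T : Finset α) (F₀ : Finset (α × α)) (rS : Finset α → ℕ)
    (pT : Finset α → ℤ) (m : α → ℤ) (V' : Finset α) : ℤ :=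
  if V' ⊆ S ∪ T ∧ memH₀ F₀ V' then
    if (V' ∩ T).card = 1 then
      max (pT (V' ∩ T) - (rS (V' ∩ S) : ℤ))
        ((∑ y ∈ V' ∩ T, m y) - ((V' ∩ S).card : ℤ) + ∑ y ∈ V' ∩ T, (degT F₀ y : ℤ))
    else if 2 ≤ (V' ∩ T).card then pT (V' ∩ T) - (rS (V' ∩ S) : ℤ)
    else 0
  else 0

/-- `V_s = {v ∈ V − s : sv ∉ F₀}`. -/
def Vs (S T : Finset α) (F₀ : Finset (α × α)) (s : α) : Finset α :=
  ((S ∪ T).erase s).filter (fun v => (s, v) ∉ F₀)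

/-- The set-function `p₁` of the paper: `p₁(V_s) = m_S(s)` for `s ∈ S`
(such an `s` is unique when it exists), and `p₁(V') = p₀(V')` otherwise. -/
def p₁ (S T : Finset α) (F₀ : Finset (α × α)) (rS : Finset α → ℕ)
    (pT : Finset α → ℤ) (m : α → ℤ) (V' : Finset α) : ℤ :=
  if ∃ s ∈ S, V' = Vs S T F₀ s then
    ∑ s ∈ S.filter (fun s => V' = Vs S T F₀ s), m s
  else p₀ S T F₀ rS pT m V'

/-- Condition (★) of the paper: for every `Y ⊆ T`, `X ⊆ S` and every subpartition
`𝒯 = {T₁, …, T_q}` of `T − Y` into nonempty sets,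
`m̃(X) + m̃(Y) − d_{G₀}(X,Y) + ∑ᵢ (p_T(Tᵢ) − r_S(X ∪ Γ_{H₀}(Tᵢ))) ≤ γ`,
where `G₀ = (S ×ˢ T) \ F₀` is the bipartite complement of `H₀`. -/
def StarCond (S T : Finset α) (F₀ : Finset (α × α)) (rS : Finset α → ℕ)
    (pT : Finset α → ℤ) (m : α → ℤ) (γ : ℤ) : Prop :=
  ∀ X ⊆ S, ∀ Y ⊆ T, ∀ 𝒯 : Finset (Finset α),
    (∀ Ti ∈ 𝒯, Ti.Nonempty ∧ Ti ⊆ T \ Y) →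
    (∀ T₁ ∈ 𝒯, ∀ T₂ ∈ 𝒯, T₁ ≠ T₂ → Disjoint T₁ T₂) →
    (∑ v ∈ X, m v) + (∑ v ∈ Y, m v)
        - (edgesBetween ((S ×ˢ T) \ F₀) X Y : ℤ)
        + ∑ Ti ∈ 𝒯, (pT Ti - (rS (X ∪ nbrs F₀ Ti) : ℤ)) ≤ γ

/-!
Every set on which `p₁` is positive lies in `ℋ₀`. A set `V_s` misses exactly one element `s`
of `S`, so it cannot take part in an `ST`-crossing pair: the partner would avoid `s` and hence,
being closed under the arcs of `H₀`, would lie inside `V_s`. On the remaining sets `p₁ = p₀`.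
On `ℋ₀`, `p₀(V')` is `p_T(V' ∩ T) − r_S(V' ∩ S)`, maximised with
`m̃_T(V' ∩ T) − |V' ∩ S| + d_{H₀}(V' ∩ T)` when `|V' ∩ T| = 1`. Each combination of these two
expressions for `X` and `Y` is dominated by the same combination for `X ∩ Y` and `X ∪ Y`, by
supermodularity of `p_T`, submodularity of `r_S` and `r_S(A ∪ B) ≤ r_S(B) + |A − B|`.
Finally `p₀ ≤ p₁`, since Condition (★) with `X = S − s` gives `p₀(V_s) ≤ m_S(s)`.
-/

theorem subset_of_card_eq_one_of_inter_nonempty {A B : Finset α} (hA : #A = 1)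
    (hAB : (A ∩ B).Nonempty) : A ⊆ B := by
  obtain ⟨a, rfl⟩ := card_eq_one.1 hA
  obtain ⟨b, hb⟩ := hAB
  rw [mem_inter, mem_singleton] at hb
  exact singleton_subset_iff.2 (hb.1 ▸ hb.2)

namespace IsRankFn

variable {S A B : Finset α} {r : Finset α → ℕ}

theorem union_le_add_card_sdiff (hr : IsRankFn S r) (hA : A ⊆ S) (hB : B ⊆ S) :
    r (A ∪ B) ≤ r A + #(B \ A) := by
  have hsub := hr.2.2 A (B \ A) hA (sdiff_subset.trans hB)
  have hcard := hr.1 (B \ A) (sdiff_subset.trans hB)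
  rw [union_sdiff_self_eq_union] at hsub
  omega

theorem union_add_card_inter_le (hr : IsRankFn S r) (hA : A ⊆ S) (hB : B ⊆ S) :
    r (A ∪ B) + #(A ∩ B) ≤ r B + #A := by
  have hunion := hr.union_le_add_card_sdiff hB hA
  have hcard := card_sdiff_add_card_inter A B
  rw [union_comm]
  omega

end IsRankFn

namespace memH₀

variable {F₀ : Finset (α × α)} {X Y : Finset α}

theorem inter (hX : memH₀ F₀ X) (hY : memH₀ F₀ Y) : memH₀ F₀ (X ∩ Y) := fun e he h =>
  mem_inter.2 ⟨hX e he (mem_inter.1 h).1, hY e he (mem_inter.1 h).2⟩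

theorem union (hX : memH₀ F₀ X) (hY : memH₀ F₀ Y) : memH₀ F₀ (X ∪ Y) := fun e he h =>
  mem_union.2 ((mem_union.1 h).imp (hX e he) (hY e he))

end memH₀

section Bigraph

variable {S T : Finset α} {F₀ : Finset (α × α)} {s : α}

theorem mem_Vs {v : α} : v ∈ Vs S T F₀ s ↔ v ≠ s ∧ v ∈ S ∪ T ∧ (s, v) ∉ F₀ := by
  simp only [Vs, mem_filter, mem_erase, and_assoc]

theorem Vs_subset : Vs S T F₀ s ⊆ S ∪ T := fun _ hv => (mem_Vs.1 hv).2.1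

theorem mem_Vs_of_mem_left (hST : Disjoint S T) (hF₀ : F₀ ⊆ S ×ˢ T) {v : α} (hv : v ∈ S)
    (hne : v ≠ s) : v ∈ Vs S T F₀ s :=
  mem_Vs.2 ⟨hne, mem_union_left T hv, fun h => disjoint_left.1 hST hv (mem_product.1 (hF₀ h)).2⟩

theorem Vs_inter_left (hST : Disjoint S T) (hF₀ : F₀ ⊆ S ×ˢ T) :
    Vs S T F₀ s ∩ S = S.erase s := by
  ext v
  rw [mem_inter, mem_erase]
  exact ⟨fun h => ⟨(mem_Vs.1 h.1).1, h.2⟩, fun h => ⟨mem_Vs_of_mem_left hST hF₀ h.2 h.1, h.2⟩⟩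

theorem Vs_injOn (hST : Disjoint S T) (hF₀ : F₀ ⊆ S ×ˢ T) : Set.InjOn (Vs S T F₀) S :=
  fun s hs s' hs' h => erase_injOn S hs hs' <| by
    rw [← Vs_inter_left hST hF₀, ← Vs_inter_left hST hF₀, h]

theorem memH₀_Vs (hST : Disjoint S T) (hF₀ : F₀ ⊆ S ×ˢ T) : memH₀ F₀ (Vs S T F₀ s) := by
  rintro ⟨u, t⟩ he ht
  refine mem_Vs_of_mem_left hST hF₀ (mem_product.1 (hF₀ he)).1 ?_
  rintro rfl
  exact (mem_Vs.1 ht).2.2 he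

theorem subset_Vs {Y : Finset α} (hY : Y ⊆ S ∪ T) (hmY : memH₀ F₀ Y) (hs : s ∉ Y) :
    Y ⊆ Vs S T F₀ s := fun _ hv =>
  mem_Vs.2 ⟨fun h => hs (h ▸ hv), hY hv, fun he => hs (hmY _ he hv)⟩

theorem subset_Vs_of_crossing (hST : Disjoint S T) (hF₀ : F₀ ⊆ S ×ˢ T)
    {Y : Finset α} (hY : Y ⊆ S ∪ T) (hmY : memH₀ F₀ Y)
    (hcross : (S \ (Vs S T F₀ s ∪ Y)).Nonempty) :
    Y ⊆ Vs S T F₀ s := by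
  obtain ⟨u, hu⟩ := hcross
  rw [mem_sdiff, mem_union, not_or] at hu
  obtain ⟨huS, huV, huY⟩ := hu
  have hus : u = s := by
    by_contra hne
    exact huV (mem_Vs_of_mem_left hST hF₀ huS hne)
  exact subset_Vs hY hmY (hus ▸ huY)

theorem nbrs_subset_erase (hF₀ : F₀ ⊆ S ×ˢ T) {Z : Finset α} (hZ : ∀ t ∈ Z, (s, t) ∉ F₀) :
    nbrs F₀ Z ⊆ S.erase s := by
  intro u hu
  obtain ⟨⟨u, t⟩, he, rfl⟩ := mem_image.1 hu
  rw [mem_filter] at he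
  refine mem_erase.2 ⟨?_, (mem_product.1 (hF₀ he.1)).1⟩
  rintro rfl
  exact hZ t he.2 he.1

theorem edgesBetween_compl_add_degT {X : Finset α} {y : α} (hX : X ⊆ S)
    (hy : y ∈ T) (hN : ∀ x, (x, y) ∈ F₀ → x ∈ X) :
    edgesBetween ((S ×ˢ T) \ F₀) X {y} + degT F₀ y = #X := by
  have hcompl : ((S ×ˢ T) \ F₀).filter (fun e => e.1 ∈ X ∧ e.2 ∈ ({y} : Finset α)) =
      (X ×ˢ {y}) \ F₀ := by
    ext ⟨u, t⟩
    simp only [mem_filter, mem_sdiff, mem_product, mem_singleton]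
    constructor
    · rintro ⟨⟨-, hnF⟩, hu, ht⟩
      exact ⟨⟨hu, ht⟩, hnF⟩
    · rintro ⟨⟨hu, rfl⟩, hnF⟩
      exact ⟨⟨⟨hX hu, hy⟩, hnF⟩, hu, rfl⟩
  have hF : F₀.filter (fun e => e.2 = y) = (X ×ˢ {y}) ∩ F₀ := by
    ext ⟨u, t⟩
    simp only [mem_filter, mem_inter, mem_product, mem_singleton]
    constructor
    · rintro ⟨he, rfl⟩
      exact ⟨⟨hN u he, rfl⟩, he⟩
    · rintro ⟨⟨-, rfl⟩, he⟩
      exact ⟨he, rfl⟩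
  rw [edgesBetween, degT, hcompl, hF, card_sdiff_add_card_inter, card_product, card_singleton,
    mul_one]

end Bigraph

namespace StarCond

variable {S T : Finset α} {F₀ : Finset (α × α)} {rS : Finset α → ℕ} {pT : Finset α → ℤ}
  {m : α → ℤ} {γ : ℤ} {X : Finset α}

theorem sum_add_sum_sub_edgesBetween_le (h : StarCond S T F₀ rS pT m γ) (hX : X ⊆ S)
    {Y : Finset α} (hY : Y ⊆ T) :
    ∑ v ∈ X, m v + ∑ v ∈ Y, m v - (edgesBetween ((S ×ˢ T) \ F₀) X Y : ℤ) ≤ γ := by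
  simpa using h X hX Y hY ∅ (by simp) (by simp)

theorem sum_add_part_le (h : StarCond S T F₀ rS pT m γ) (hX : X ⊆ S) {Z : Finset α}
    (hZ : Z ⊆ T) (hZne : Z.Nonempty) :
    ∑ v ∈ X, m v + (pT Z - (rS (X ∪ nbrs F₀ Z) : ℤ)) ≤ γ := by
  simpa [edgesBetween] using
    h X hX ∅ (empty_subset T) {Z} (by simpa using ⟨hZne, hZ⟩) (by simp)

end StarCond

section SetFunctions

variable {S T : Finset α} {F₀ : Finset (α × α)} {rS : Finset α → ℕ} {pT : Finset α → ℤ}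
  {m : α → ℤ} {X Y V' : Finset α}

def rankTerm (S T : Finset α) (rS : Finset α → ℕ) (pT : Finset α → ℤ) (V' : Finset α) : ℤ :=
  pT (V' ∩ T) - (rS (V' ∩ S) : ℤ)

def degTerm (S T : Finset α) (F₀ : Finset (α × α)) (m : α → ℤ) (V' : Finset α) : ℤ :=
  (∑ y ∈ V' ∩ T, m y) - (#(V' ∩ S) : ℤ) + ∑ y ∈ V' ∩ T, (degT F₀ y : ℤ)

theorem rankTerm_add_rankTerm_le (hrS : IsRankFn S rS)
    (hpT : pT (X ∩ T) + pT (Y ∩ T) ≤ pT (X ∩ T ∩ (Y ∩ T)) + pT (X ∩ T ∪ Y ∩ T)) :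
    rankTerm S T rS pT X + rankTerm S T rS pT Y ≤
      rankTerm S T rS pT (X ∩ Y) + rankTerm S T rS pT (X ∪ Y) := by
  have hsub : (rS (X ∩ S ∪ Y ∩ S) : ℤ) + rS (X ∩ S ∩ (Y ∩ S)) ≤ rS (X ∩ S) + rS (Y ∩ S) := by
    exact_mod_cast hrS.2.2 _ _ inter_subset_right inter_subset_right
  rw [rankTerm, rankTerm, rankTerm, rankTerm, inter_inter_distrib_right X Y T,
    inter_inter_distrib_right X Y S, union_inter_distrib_right X Y T,
    union_inter_distrib_right X Y S]
  linarith

theorem degTerm_add_rankTerm_le (hrS : IsRankFn S rS) (hXY : X ∩ T ⊆ Y ∩ T) :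
    degTerm S T F₀ m X + rankTerm S T rS pT Y ≤
      degTerm S T F₀ m (X ∩ Y) + rankTerm S T rS pT (X ∪ Y) := by
  have hmix : (rS (X ∩ S ∪ Y ∩ S) : ℤ) + #(X ∩ S ∩ (Y ∩ S)) ≤ rS (Y ∩ S) + #(X ∩ S) := by
    exact_mod_cast hrS.union_add_card_inter_le inter_subset_right inter_subset_right
  rw [degTerm, degTerm, rankTerm, rankTerm, inter_inter_distrib_right X Y T,
    inter_inter_distrib_right X Y S, union_inter_distrib_right X Y S,
    union_inter_distrib_right X Y T, inter_eq_left.2 hXY, union_eq_right.2 hXY]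
  linarith

theorem degTerm_add_degTerm (hXY : X ∩ T = Y ∩ T) :
    degTerm S T F₀ m X + degTerm S T F₀ m Y =
      degTerm S T F₀ m (X ∩ Y) + degTerm S T F₀ m (X ∪ Y) := by
  have hcard : (#(X ∩ S ∪ Y ∩ S) : ℤ) + #(X ∩ S ∩ (Y ∩ S)) = #(X ∩ S) + #(Y ∩ S) := by
    exact_mod_cast card_union_add_card_inter _ _
  rw [degTerm, degTerm, degTerm, degTerm, inter_inter_distrib_right X Y T,
    inter_inter_distrib_right X Y S, union_inter_distrib_right X Y S,
    union_inter_distrib_right X Y T, hXY, inter_self, union_self]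
  linarith

theorem rankTerm_le_p₀ (hV : V' ⊆ S ∪ T) (hm : memH₀ F₀ V') (hne : (V' ∩ T).Nonempty) :
    rankTerm S T rS pT V' ≤ p₀ S T F₀ rS pT m V' := by
  have hpos := card_pos.2 hne
  rw [p₀, if_pos ⟨hV, hm⟩]
  split_ifs
  · exact le_max_left _ _
  · exact le_rfl
  · omega

theorem degTerm_le_p₀ (hV : V' ⊆ S ∪ T) (hm : memH₀ F₀ V') (h1 : #(V' ∩ T) = 1) :
    degTerm S T F₀ m V' ≤ p₀ S T F₀ rS pT m V' := by
  rw [p₀, if_pos ⟨hV, hm⟩, if_pos h1]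
  exact le_max_right _ _

theorem mem_ℋ₀_of_p₀_pos (h : 0 < p₀ S T F₀ rS pT m V') : V' ⊆ S ∪ T ∧ memH₀ F₀ V' := by
  by_contra hV
  rw [p₀, if_neg hV] at h
  exact h.false

theorem p₀_eq_of_pos (h : 0 < p₀ S T F₀ rS pT m V') :
    p₀ S T F₀ rS pT m V' = rankTerm S T rS pT V' ∨
      #(V' ∩ T) = 1 ∧ p₀ S T F₀ rS pT m V' = degTerm S T F₀ m V' := by
  have hV := mem_ℋ₀_of_p₀_pos h
  rw [p₀, if_pos hV] at h ⊢
  split_ifs at h ⊢ with h1 h2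
  · exact (max_choice _ _).imp id fun hdeg => ⟨h1, hdeg⟩
  · exact Or.inl rfl
  · exact absurd h (lt_irrefl 0)

theorem degTerm_add_rankTerm_le_p₀ (hrS : IsRankFn S rS) (hX : X ⊆ S ∪ T) (hY : Y ⊆ S ∪ T)
    (hmX : memH₀ F₀ X) (hmY : memH₀ F₀ Y) (hX1 : #(X ∩ T) = 1)
    (hne : (X ∩ T ∩ (Y ∩ T)).Nonempty) :
    degTerm S T F₀ m X + rankTerm S T rS pT Y ≤
      p₀ S T F₀ rS pT m (X ∩ Y) + p₀ S T F₀ rS pT m (X ∪ Y) := by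
  have hXY := subset_of_card_eq_one_of_inter_nonempty hX1 hne
  have hI1 : #(X ∩ Y ∩ T) = 1 := by rwa [inter_inter_distrib_right, inter_eq_left.2 hXY]
  have hdegI : degTerm S T F₀ m (X ∩ Y) ≤ p₀ S T F₀ rS pT m (X ∩ Y) :=
    degTerm_le_p₀ (inter_subset_left.trans hX) (hmX.inter hmY) hI1
  have hrankU : rankTerm S T rS pT (X ∪ Y) ≤ p₀ S T F₀ rS pT m (X ∪ Y) :=
    rankTerm_le_p₀ (union_subset hX hY) (hmX.union hmY)
      (hne.mono (by rw [union_inter_distrib_right]; exact inter_subset_union))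
  linarith [degTerm_add_rankTerm_le (F₀ := F₀) (m := m) (pT := pT) hrS hXY]

theorem p₀_add_p₀_le (hrS : IsRankFn S rS)
    (hpT : ∀ X Y : Finset α, X ⊆ T → Y ⊆ T → (X ∩ Y).Nonempty →
      0 < pT X → 0 < pT Y → pT X + pT Y ≤ pT (X ∩ Y) + pT (X ∪ Y))
    (hne : (X ∩ Y ∩ T).Nonempty)
    (hpX : 0 < p₀ S T F₀ rS pT m X) (hpY : 0 < p₀ S T F₀ rS pT m Y) :
    p₀ S T F₀ rS pT m X + p₀ S T F₀ rS pT m Y ≤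
      p₀ S T F₀ rS pT m (X ∩ Y) + p₀ S T F₀ rS pT m (X ∪ Y) := by
  obtain ⟨hXV, hmX⟩ := mem_ℋ₀_of_p₀_pos hpX
  obtain ⟨hYV, hmY⟩ := mem_ℋ₀_of_p₀_pos hpY
  have hne' : (X ∩ T ∩ (Y ∩ T)).Nonempty := inter_inter_distrib_right X Y T ▸ hne
  rcases p₀_eq_of_pos hpX with hX | ⟨hX1, hX⟩ <;> rcases p₀_eq_of_pos hpY with hY | ⟨hY1, hY⟩
  · have hr (V : Finset α) : (0 : ℤ) ≤ rS (V ∩ S) := Int.natCast_nonneg _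
    have hsup := rankTerm_add_rankTerm_le hrS
      (hpT _ _ inter_subset_right inter_subset_right hne'
        (by rw [hX, rankTerm] at hpX; linarith [hr X])
        (by rw [hY, rankTerm] at hpY; linarith [hr Y]))
    have hrankI : rankTerm S T rS pT (X ∩ Y) ≤ p₀ S T F₀ rS pT m (X ∩ Y) :=
      rankTerm_le_p₀ (inter_subset_left.trans hXV) (hmX.inter hmY) hne
    have hrankU : rankTerm S T rS pT (X ∪ Y) ≤ p₀ S T F₀ rS pT m (X ∪ Y) :=
      rankTerm_le_p₀ (union_subset hXV hYV) (hmX.union hmY)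
        (hne.mono (inter_subset_inter inter_subset_union Subset.rfl))
    linarith
  · have hsup := degTerm_add_rankTerm_le_p₀ (m := m) (pT := pT) hrS hYV hXV hmY hmX hY1
      (inter_comm (X ∩ T) _ ▸ hne')
    rw [inter_comm Y X, union_comm Y X] at hsup
    linarith
  · linarith [degTerm_add_rankTerm_le_p₀ (m := m) (pT := pT) hrS hXV hYV hmX hmY hX1 hne']
  · have hXYT : X ∩ T = Y ∩ T := (subset_of_card_eq_one_of_inter_nonempty hX1 hne').antisymm
      (subset_of_card_eq_one_of_inter_nonempty hY1 (inter_comm (X ∩ T) _ ▸ hne'))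
    have hI1 : #(X ∩ Y ∩ T) = 1 := by rwa [inter_inter_distrib_right, ← hXYT, inter_self]
    have hU1 : #((X ∪ Y) ∩ T) = 1 := by rwa [union_inter_distrib_right, ← hXYT, union_self]
    have hdegI : degTerm S T F₀ m (X ∩ Y) ≤ p₀ S T F₀ rS pT m (X ∩ Y) :=
      degTerm_le_p₀ (inter_subset_left.trans hXV) (hmX.inter hmY) hI1
    have hdegU : degTerm S T F₀ m (X ∪ Y) ≤ p₀ S T F₀ rS pT m (X ∪ Y) :=
      degTerm_le_p₀ (union_subset hXV hYV) (hmX.union hmY) hU1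
    linarith [degTerm_add_degTerm (S := S) (F₀ := F₀) (m := m) hXYT]

theorem p₁_Vs (hST : Disjoint S T) (hF₀ : F₀ ⊆ S ×ˢ T) {s : α} (hs : s ∈ S) :
    p₁ S T F₀ rS pT m (Vs S T F₀ s) = m s := by
  have hfilter : S.filter (fun s' => Vs S T F₀ s = Vs S T F₀ s') = {s} := by
    ext s'
    rw [mem_filter, mem_singleton]
    exact ⟨fun h => (Vs_injOn hST hF₀ hs h.1 h.2).symm, by rintro rfl; exact ⟨hs, rfl⟩⟩
  rw [p₁, if_pos ⟨s, hs, rfl⟩, hfilter, sum_singleton]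

theorem p₁_of_not_exists_eq_Vs (h : ¬∃ s ∈ S, V' = Vs S T F₀ s) :
    p₁ S T F₀ rS pT m V' = p₀ S T F₀ rS pT m V' :=
  if_neg h

theorem mem_ℋ₀_of_p₁_pos (hST : Disjoint S T) (hF₀ : F₀ ⊆ S ×ˢ T)
    (h : 0 < p₁ S T F₀ rS pT m V') : V' ⊆ S ∪ T ∧ memH₀ F₀ V' := by
  by_cases hV : ∃ s ∈ S, V' = Vs S T F₀ s
  · obtain ⟨s, -, rfl⟩ := hV
    exact ⟨Vs_subset, memH₀_Vs hST hF₀⟩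
  · rw [p₁_of_not_exists_eq_Vs hV] at h
    exact mem_ℋ₀_of_p₀_pos h

end SetFunctions

section ConditionStar

variable {S T : Finset α} {F₀ : Finset (α × α)} {rS : Finset α → ℕ} {pT : Finset α → ℤ}
  {m : α → ℤ} {γ : ℤ} {s : α}

theorem rankTerm_Vs_le (hST : Disjoint S T) (hF₀ : F₀ ⊆ S ×ˢ T) (hγS : ∑ v ∈ S, m v = γ)
    (hstar : StarCond S T F₀ rS pT m γ) (hs : s ∈ S) (hne : (Vs S T F₀ s ∩ T).Nonempty) :
    rankTerm S T rS pT (Vs S T F₀ s) ≤ m s := by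
  have hnbrs : nbrs F₀ (Vs S T F₀ s ∩ T) ⊆ S.erase s :=
    nbrs_subset_erase hF₀ fun _ ht => (mem_Vs.1 (mem_inter.1 ht).1).2.2
  have h := hstar.sum_add_part_le (erase_subset s S) inter_subset_right hne
  rw [union_eq_left.2 hnbrs, sum_erase_eq_sub hs, hγS] at h
  rw [rankTerm, Vs_inter_left hST hF₀]
  linarith

theorem degTerm_Vs_le (hST : Disjoint S T) (hF₀ : F₀ ⊆ S ×ˢ T) (hγS : ∑ v ∈ S, m v = γ)
    (hstar : StarCond S T F₀ rS pT m γ) (hs : s ∈ S) (h1 : #(Vs S T F₀ s ∩ T) = 1) :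
    degTerm S T F₀ m (Vs S T F₀ s) ≤ m s := by
  obtain ⟨y, hy⟩ := card_eq_one.1 h1
  obtain ⟨hyV, hyT⟩ := mem_inter.1 (hy ▸ mem_singleton_self y : y ∈ Vs S T F₀ s ∩ T)
  have hnbrs (x : α) (hx : (x, y) ∈ F₀) : x ∈ S.erase s := by
    refine mem_erase.2 ⟨?_, (mem_product.1 (hF₀ hx)).1⟩
    rintro rfl
    exact (mem_Vs.1 hyV).2.2 hx
  have hedges :
      (edgesBetween ((S ×ˢ T) \ F₀) (S.erase s) {y} : ℤ) + degT F₀ y = #(S.erase s) := by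
    exact_mod_cast edgesBetween_compl_add_degT (erase_subset s S) hyT hnbrs
  have h := hstar.sum_add_sum_sub_edgesBetween_le (erase_subset s S) (singleton_subset_iff.2 hyT)
  rw [sum_erase_eq_sub hs, hγS, sum_singleton] at h
  rw [degTerm, hy, Vs_inter_left hST hF₀, sum_singleton, sum_singleton]
  linarith

theorem p₀_Vs_le (hST : Disjoint S T) (hF₀ : F₀ ⊆ S ×ˢ T) (hγS : ∑ v ∈ S, m v = γ)
    (hstar : StarCond S T F₀ rS pT m γ) (hs : s ∈ S) :
    p₀ S T F₀ rS pT m (Vs S T F₀ s) ≤ m s := by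
  rw [p₀, if_pos ⟨Vs_subset, memH₀_Vs hST hF₀⟩]
  split_ifs with h1 h2
  · exact max_le (rankTerm_Vs_le hST hF₀ hγS hstar hs (card_pos.1 (by omega)))
      (degTerm_Vs_le hST hF₀ hγS hstar hs h1)
  · exact rankTerm_Vs_le hST hF₀ hγS hstar hs (card_pos.1 (by omega))
  · have h := hstar.sum_add_sum_sub_edgesBetween_le (erase_subset s S) (empty_subset T)
    simpa [edgesBetween, sum_erase_eq_sub hs, hγS] using h

theorem p₀_le_p₁ (hST : Disjoint S T) (hF₀ : F₀ ⊆ S ×ˢ T) (hγS : ∑ v ∈ S, m v = γ)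
    (hstar : StarCond S T F₀ rS pT m γ) (V' : Finset α) :
    p₀ S T F₀ rS pT m V' ≤ p₁ S T F₀ rS pT m V' := by
  by_cases h : ∃ s ∈ S, V' = Vs S T F₀ s
  · obtain ⟨s, hs, rfl⟩ := h
    rw [p₁_Vs hST hF₀ hs]
    exact p₀_Vs_le hST hF₀ hγS hstar hs
  · rw [p₁_of_not_exists_eq_Vs h]

end ConditionStar

theorem p₁_positively_ST_crossing_supermodular_general
    (S T : Finset α) (hST : Disjoint S T)
    (F₀ : Finset (α × α)) (hF₀ : F₀ ⊆ S ×ˢ T)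
    (rS : Finset α → ℕ) (hrS : IsRankFn S rS)
    (pT : Finset α → ℤ)
    -- `p_T` is positively intersecting supermodular on `T`
    (hpT : ∀ X Y : Finset α, X ⊆ T → Y ⊆ T → (X ∩ Y).Nonempty →
      0 < pT X → 0 < pT Y → pT X + pT Y ≤ pT (X ∩ Y) + pT (X ∪ Y))
    (m : α → ℤ) (γ : ℤ)
    (hγS : ∑ v ∈ S, m v = γ)
    (hstar : StarCond S T F₀ rS pT m γ) :
    ∀ X Y : Finset α, X ⊆ S ∪ T → Y ⊆ S ∪ T → ¬ X ⊆ Y → ¬ Y ⊆ X →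
      (X ∩ Y ∩ T).Nonempty → (S \ (X ∪ Y)).Nonempty →
      0 < p₁ S T F₀ rS pT m X → 0 < p₁ S T F₀ rS pT m Y →
      p₁ S T F₀ rS pT m X + p₁ S T F₀ rS pT m Y ≤
        p₁ S T F₀ rS pT m (X ∩ Y) + p₁ S T F₀ rS pT m (X ∪ Y) := by
  intro X Y _ _ hXY hYX hneT hneS hpX hpY
  obtain ⟨hXV, hmX⟩ := mem_ℋ₀_of_p₁_pos hST hF₀ hpX
  obtain ⟨hYV, hmY⟩ := mem_ℋ₀_of_p₁_pos hST hF₀ hpY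
  have hX : ¬∃ s ∈ S, X = Vs S T F₀ s := by
    rintro ⟨s, -, rfl⟩
    exact hYX (subset_Vs_of_crossing hST hF₀ hYV hmY hneS)
  have hY : ¬∃ s ∈ S, Y = Vs S T F₀ s := by
    rintro ⟨s, -, rfl⟩
    exact hXY (subset_Vs_of_crossing hST hF₀ hXV hmX (union_comm X _ ▸ hneS))
  rw [p₁_of_not_exists_eq_Vs hX] at hpX ⊢
  rw [p₁_of_not_exists_eq_Vs hY] at hpY ⊢
  calc p₀ S T F₀ rS pT m X + p₀ S T F₀ rS pT m Y
      ≤ p₀ S T F₀ rS pT m (X ∩ Y) + p₀ S T F₀ rS pT m (X ∪ Y) :=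
        p₀_add_p₀_le hrS hpT hneT hpX hpY
    _ ≤ p₁ S T F₀ rS pT m (X ∩ Y) + p₁ S T F₀ rS pT m (X ∪ Y) :=
        add_le_add (p₀_le_p₁ hST hF₀ hγS hstar _) (p₀_le_p₁ hST hF₀ hγS hstar _)

/-- **Claim 6 of the paper.** Under Condition (★), the set-function `p₁` is positively
`ST`-crossing supermodular: the supermodular inequality holds for any two non-comparable
subsets `X, Y` of `V = S ∪ T` with `X ∩ Y ∩ T ≠ ∅`, `S − (X ∪ Y) ≠ ∅`,
`p₁(X) > 0` and `p₁(Y) > 0`. -/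
theorem p₁_positively_ST_crossing_supermodular
    (S T : Finset α) (hST : Disjoint S T) (hS : S.Nonempty) (hT : T.Nonempty)
    (F₀ : Finset (α × α)) (hF₀ : F₀ ⊆ S ×ˢ T)
    (rS : Finset α → ℕ) (hrS : IsRankFn S rS)
    (pT : Finset α → ℤ)
    -- `p_T` is positively intersecting supermodular on `T`
    (hpT : ∀ X Y : Finset α, X ⊆ T → Y ⊆ T → (X ∩ Y).Nonempty →
      0 < pT X → 0 < pT Y → pT X + pT Y ≤ pT (X ∩ Y) + pT (X ∪ Y))
    (m : α → ℤ) (γ : ℤ)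
    (hγS : ∑ v ∈ S, m v = γ) (hγT : ∑ v ∈ T, m v = γ)
    (hstar : StarCond S T F₀ rS pT m γ) :
    ∀ X Y : Finset α, X ⊆ S ∪ T → Y ⊆ S ∪ T → ¬ X ⊆ Y → ¬ Y ⊆ X →
      (X ∩ Y ∩ T).Nonempty → (S \ (X ∪ Y)).Nonempty →
      0 < p₁ S T F₀ rS pT m X → 0 < p₁ S T F₀ rS pT m Y →
      p₁ S T F₀ rS pT m X + p₁ S T F₀ rS pT m Y ≤
        p₁ S T F₀ rS pT m (X ∩ Y) + p₁ S T F₀ rS pT m (X ∪ Y) :=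
  p₁_positively_ST_crossing_supermodular_general S T hST F₀ hF₀ rS hrS pT hpT m γ hγS hstar
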